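/- arXiv:2605.00463 — 2 statements merged into one kernel-verified Lean document; each statement's English description precedes it below -/
import Mathlib

section
/- Let k be a field and R a commutative ring with an ℕ-grading 𝒜 : ℕ → Submodule k R making R a graded k-algebra with 𝒜 0 = k·1 (the image of k in R). Suppose there exists a strictly increasing chain of prime ideals 𝔭₀ ⊊ 𝔭₁ ⊊ ⋯ ⊊ 𝔭_r of R of length r. Then there exists a strictly increasing chain of homogeneous prime ideals of R of length at least ⌊r/2⌋. In particular, ⌊dim(R)/2⌋ ≤ dim^gr(R) ≤ dim(R), including the case dim(R) = ∞. -/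
/-!
If `s` is prime with homogeneous core `P`, no prime `q` lies strictly between `P` and `s`; so the
homogeneous cores of every other member of a chain of primes form a strictly increasing chain.

For `x ∉ P`, consider the degrees of the homogeneous components of `x` that are not in `P`; the
difference of the largest and smallest is the reduced width of `x`, which is additive because `P`
is a homogeneous prime. Pick `g ∈ s \ P` of minimal width, with leading component `c ∉ s`.
Cancelling leading terms divides every `y ∈ s` by `g` modulo `P` after multiplying by a power of
`c`. If `g ∈ q` this gives `s ≤ q`. Otherwise dividing some `f ∈ q \ P` yields a quotient in
`q \ P` of width `width f - width g < width f`, and iterating is an infinite descent.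
-/

open DirectSum Finset.HasAntidiagonal

namespace Ideal

variable {R σ : Type*} [CommRing R] [SetLike σ R] [AddSubgroupClass σ R] (𝒜 : ℕ → σ)
  [GradedRing 𝒜] (P : Ideal R)

def reducedSupport (x : R) : Set ℕ := {i | (decompose 𝒜 x i : R) ∉ P}

noncomputable def reducedTop (x : R) : ℕ := sSup (P.reducedSupport 𝒜 x)

noncomputable def reducedBot (x : R) : ℕ := sInf (P.reducedSupport 𝒜 x)

noncomputable def reducedWidth (x : R) : ℕ := P.reducedTop 𝒜 x - P.reducedBot 𝒜 x

theorem reducedSupport_bddAbove (x : R) : BddAbove (P.reducedSupport 𝒜 x) := by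
  classical
  refine ((decompose 𝒜 x).support.finite_toSet.subset fun i hi => ?_).bddAbove
  rw [Finset.mem_coe, DFinsupp.mem_support_iff]
  intro h
  exact hi (by simp [h])

variable {𝒜 P}

theorem mem_of_forall_decompose_mem {x : R} (h : ∀ i, (decompose 𝒜 x i : R) ∈ P) : x ∈ P := by
  classical
  rw [← sum_support_decompose 𝒜 x]
  exact P.sum_mem fun i _ => h i

theorem reducedSupport_nonempty {x : R} (hx : x ∉ P) : (P.reducedSupport 𝒜 x).Nonempty := by
  by_contra h
  exact hx (mem_of_forall_decompose_mem fun i => not_not.mp fun hi => h ⟨i, hi⟩)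

theorem decompose_reducedTop_notMem {x : R} (hx : x ∉ P) :
    (decompose 𝒜 x (P.reducedTop 𝒜 x) : R) ∉ P :=
  Nat.sSup_mem (reducedSupport_nonempty hx) (reducedSupport_bddAbove 𝒜 P x)

theorem decompose_reducedBot_notMem {x : R} (hx : x ∉ P) :
    (decompose 𝒜 x (P.reducedBot 𝒜 x) : R) ∉ P :=
  Nat.sInf_mem (reducedSupport_nonempty hx)

theorem decompose_mem_of_reducedTop_lt {x : R} {i : ℕ} (hi : P.reducedTop 𝒜 x < i) :
    (decompose 𝒜 x i : R) ∈ P :=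
  not_not.mp fun h => hi.not_ge (le_csSup (reducedSupport_bddAbove 𝒜 P x) h)

theorem decompose_mem_of_lt_reducedBot {x : R} {i : ℕ} (hi : i < P.reducedBot 𝒜 x) :
    (decompose 𝒜 x i : R) ∈ P :=
  not_not.mp fun h => hi.not_ge (Nat.sInf_le h)

theorem reducedBot_le_reducedTop {x : R} (hx : x ∉ P) : P.reducedBot 𝒜 x ≤ P.reducedTop 𝒜 x :=
  not_lt.mp fun h => decompose_reducedBot_notMem hx (decompose_mem_of_reducedTop_lt h)

theorem sub_decompose_reducedTop_mem_of_reducedWidth_eq_zero {x : R} (hx : x ∉ P)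
    (hw : P.reducedWidth 𝒜 x = 0) : x - (decompose 𝒜 x (P.reducedTop 𝒜 x) : R) ∈ P := by
  have hbt := reducedBot_le_reducedTop (𝒜 := 𝒜) hx
  refine mem_of_forall_decompose_mem (𝒜 := 𝒜) fun i => ?_
  rw [decompose_sub, DirectSum.sub_apply, AddSubgroupClass.coe_sub, decompose_coe]
  obtain rfl | hi := eq_or_ne i (P.reducedTop 𝒜 x)
  · simp
  rw [of_eq_of_ne _ _ _ hi, ZeroMemClass.coe_zero, sub_zero]
  rcases hi.lt_or_gt with hi | hi
  · exact decompose_mem_of_lt_reducedBot (by unfold reducedWidth at hw; omega)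
  · exact decompose_mem_of_reducedTop_lt hi

theorem reducedWidth_eq_zero_of_mem {c : R} {d : ℕ} (hc : c ∈ 𝒜 d) (hcP : c ∉ P) :
    P.reducedWidth 𝒜 c = 0 := by
  have hsupp : P.reducedSupport 𝒜 c = {d} := by
    ext i
    obtain rfl | hi := eq_or_ne i d
    · simpa [reducedSupport, decompose_of_mem_same 𝒜 hc] using hcP
    · simp [reducedSupport, decompose_of_mem_ne 𝒜 hc hi.symm, hi]
  simp [reducedWidth, reducedTop, reducedBot, hsupp]

theorem reducedSupport_eq_of_sub_mem (hP : P.IsHomogeneous 𝒜) {x y : R} (hxy : x - y ∈ P) :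
    P.reducedSupport 𝒜 x = P.reducedSupport 𝒜 y := by
  ext i
  have hi : (decompose 𝒜 x i : R) - decompose 𝒜 y i ∈ P := by
    simpa using hP i hxy
  exact not_congr ⟨fun h => by simpa using P.sub_mem h hi, fun h => by simpa using P.add_mem hi h⟩

theorem reducedWidth_eq_of_sub_mem (hP : P.IsHomogeneous 𝒜) {x y : R} (hxy : x - y ∈ P) :
    P.reducedWidth 𝒜 x = P.reducedWidth 𝒜 y := by
  simp only [reducedWidth, reducedTop, reducedBot, reducedSupport_eq_of_sub_mem hP hxy]

theorem decompose_mul_sub_mem {x y : R} {a b : ℕ}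
    (h : ∀ i j, i + j = a + b → (i, j) ≠ (a, b) →
      (decompose 𝒜 x i : R) * decompose 𝒜 y j ∈ P) :
    (decompose 𝒜 (x * y) (a + b) : R) - decompose 𝒜 x a * decompose 𝒜 y b ∈ P := by
  have hab : (a, b) ∈ antidiagonal (a + b) := mem_antidiagonal.mpr rfl
  rw [decompose_mul, coe_mul_apply_eq_sum_antidiagonal, ← Finset.add_sum_erase _ _ hab,
    add_sub_cancel_left]
  refine P.sum_mem fun ij hij => ?_
  obtain ⟨hne, hij⟩ := Finset.mem_erase.mp hij
  exact h ij.1 ij.2 (mem_antidiagonal.mp hij) hne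

theorem decompose_mul_mem {x y : R} {n : ℕ}
    (h : ∀ i j, i + j = n → (decompose 𝒜 x i : R) * decompose 𝒜 y j ∈ P) :
    (decompose 𝒜 (x * y) n : R) ∈ P := by
  rw [decompose_mul, coe_mul_apply_eq_sum_antidiagonal]
  exact P.sum_mem fun ij hij => h ij.1 ij.2 (mem_antidiagonal.mp hij)

section Prime

variable [hP : P.IsPrime] {x y : R}

theorem reducedTop_mul (hx : x ∉ P) (hy : y ∉ P) :
    P.reducedTop 𝒜 (x * y) = P.reducedTop 𝒜 x + P.reducedTop 𝒜 y := by
  have hterm : ∀ i j, P.reducedTop 𝒜 x < i ∨ P.reducedTop 𝒜 y < j →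
      (decompose 𝒜 x i : R) * decompose 𝒜 y j ∈ P := by
    rintro i j (hi | hj)
    · exact P.mul_mem_right _ (decompose_mem_of_reducedTop_lt hi)
    · exact P.mul_mem_left _ (decompose_mem_of_reducedTop_lt hj)
  refine IsGreatest.csSup_eq ⟨fun hmem => ?_, fun n hn => not_lt.mp fun hlt => hn ?_⟩
  · have hlead := P.sub_mem hmem <|
      decompose_mul_sub_mem (a := P.reducedTop 𝒜 x) (b := P.reducedTop 𝒜 y) fun i j hij hne =>
        hterm i j (by rw [Ne, Prod.mk.injEq] at hne; omega)
    rw [sub_sub_cancel] at hlead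
    exact (hP.mem_or_mem hlead).elim (decompose_reducedTop_notMem hx)
      (decompose_reducedTop_notMem hy)
  · exact decompose_mul_mem fun i j hij => hterm i j (by omega)

theorem reducedBot_mul (hx : x ∉ P) (hy : y ∉ P) :
    P.reducedBot 𝒜 (x * y) = P.reducedBot 𝒜 x + P.reducedBot 𝒜 y := by
  have hterm : ∀ i j, i < P.reducedBot 𝒜 x ∨ j < P.reducedBot 𝒜 y →
      (decompose 𝒜 x i : R) * decompose 𝒜 y j ∈ P := by
    rintro i j (hi | hj)
    · exact P.mul_mem_right _ (decompose_mem_of_lt_reducedBot hi)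
    · exact P.mul_mem_left _ (decompose_mem_of_lt_reducedBot hj)
  refine IsLeast.csInf_eq ⟨fun hmem => ?_, fun n hn => not_lt.mp fun hlt => hn ?_⟩
  · have hlead := P.sub_mem hmem <|
      decompose_mul_sub_mem (a := P.reducedBot 𝒜 x) (b := P.reducedBot 𝒜 y) fun i j hij hne =>
        hterm i j (by rw [Ne, Prod.mk.injEq] at hne; omega)
    rw [sub_sub_cancel] at hlead
    exact (hP.mem_or_mem hlead).elim (decompose_reducedBot_notMem hx)
      (decompose_reducedBot_notMem hy)
  · exact decompose_mul_mem fun i j hij => hterm i j (by omega)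

theorem reducedWidth_mul (hx : x ∉ P) (hy : y ∉ P) :
    P.reducedWidth 𝒜 (x * y) = P.reducedWidth 𝒜 x + P.reducedWidth 𝒜 y := by
  have := reducedBot_le_reducedTop (𝒜 := 𝒜) hx
  have := reducedBot_le_reducedTop (𝒜 := 𝒜) hy
  simp only [reducedWidth, reducedTop_mul hx hy, reducedBot_mul hx hy]
  omega

end Prime

theorem decompose_mul_mem_of_mem_left {c : R} {d : ℕ} (hc : c ∈ 𝒜 d) (y : R) {m : ℕ}
    (h : d ≤ m → (decompose 𝒜 y (m - d) : R) ∈ P) : (decompose 𝒜 (c * y) m : R) ∈ P := by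
  classical
  rw [coe_decompose_mul_of_left_mem 𝒜 m hc]
  split_ifs with hdm
  exacts [P.mul_mem_left _ (h hdm), P.zero_mem]

theorem reducedWidth_mul_sub_mul_lt {g y : R} (hgP : g ∉ P) (hyP : y ∉ P)
    (hwidth : P.reducedWidth 𝒜 g ≤ P.reducedWidth 𝒜 y)
    (hzP : (decompose 𝒜 g (P.reducedTop 𝒜 g) : R) * y -
      (decompose 𝒜 y (P.reducedTop 𝒜 y) : R) * g ∉ P) :
    P.reducedWidth 𝒜 ((decompose 𝒜 g (P.reducedTop 𝒜 g) : R) * y -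
      (decompose 𝒜 y (P.reducedTop 𝒜 y) : R) * g) < P.reducedWidth 𝒜 y := by
  set t := P.reducedTop 𝒜 g
  set u := P.reducedTop 𝒜 y
  set c := (decompose 𝒜 g t : R)
  set e := (decompose 𝒜 y u : R)
  set z := c * y - e * g
  have hc : c ∈ 𝒜 t := SetLike.coe_mem _
  have he : e ∈ 𝒜 u := SetLike.coe_mem _
  have hg := reducedBot_le_reducedTop (𝒜 := 𝒜) hgP
  have hy := reducedBot_le_reducedTop (𝒜 := 𝒜) hyP
  have hz := reducedBot_le_reducedTop (𝒜 := 𝒜) hzP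
  unfold reducedWidth at hwidth ⊢
  -- The top components of `c * y` and `e * g` cancel, and `hwidth` keeps the bottom components
  -- of `e * g` from reaching below those of `c * y`.
  have hz_high : ∀ m, t + u ≤ m → (decompose 𝒜 z m : R) ∈ P := by
    intro m hm
    obtain rfl | hm := hm.eq_or_lt
    · have hcomm : (decompose 𝒜 z (t + u) : R) = 0 := by
        rw [decompose_sub, DirectSum.sub_apply, AddSubgroupClass.coe_sub,
          coe_decompose_mul_add_of_left_mem 𝒜 hc, add_comm,
          coe_decompose_mul_add_of_left_mem 𝒜 he, mul_comm, sub_self]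
      exact hcomm ▸ P.zero_mem
    rw [decompose_sub, DirectSum.sub_apply, AddSubgroupClass.coe_sub]
    exact P.sub_mem
      (decompose_mul_mem_of_mem_left hc y fun _ => decompose_mem_of_reducedTop_lt (by omega))
      (decompose_mul_mem_of_mem_left he g fun _ => decompose_mem_of_reducedTop_lt (by omega))
  have hz_low : ∀ m, m < t + P.reducedBot 𝒜 y → (decompose 𝒜 z m : R) ∈ P := by
    intro m hm
    rw [decompose_sub, DirectSum.sub_apply, AddSubgroupClass.coe_sub]
    exact P.sub_mem
      (decompose_mul_mem_of_mem_left hc y fun _ => decompose_mem_of_lt_reducedBot (by omega))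
      (decompose_mul_mem_of_mem_left he g fun _ => decompose_mem_of_lt_reducedBot (by omega))
  have hz_top : P.reducedTop 𝒜 z < t + u :=
    not_le.mp fun h => decompose_reducedTop_notMem hzP (hz_high _ h)
  have hz_bot : t + P.reducedBot 𝒜 y ≤ P.reducedBot 𝒜 z :=
    not_lt.mp fun h => decompose_reducedBot_notMem hzP (hz_low _ h)
  omega

theorem exists_pow_mul_sub_mul_mem {s : Ideal R} {g : R} (hgs : g ∈ s) (hgP : g ∉ P)
    (hmin : ∀ w ∈ s, w ∉ P → P.reducedWidth 𝒜 g ≤ P.reducedWidth 𝒜 w) {y : R} (hys : y ∈ s) :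
    ∃ (N : ℕ) (a : R), (decompose 𝒜 g (P.reducedTop 𝒜 g) : R) ^ N * y - a * g ∈ P := by
  induction hn : P.reducedWidth 𝒜 y using Nat.strong_induction_on generalizing y with
  | _ n ih =>
  by_cases hyP : y ∈ P
  · exact ⟨0, 0, by simpa using hyP⟩
  set c := (decompose 𝒜 g (P.reducedTop 𝒜 g) : R)
  set e := (decompose 𝒜 y (P.reducedTop 𝒜 y) : R)
  by_cases hzP : c * y - e * g ∈ P
  · exact ⟨1, e, by simpa using hzP⟩
  have hzs : c * y - e * g ∈ s := s.sub_mem (s.mul_mem_left _ hys) (s.mul_mem_left _ hgs)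
  obtain ⟨M, a, hM⟩ :=
    ih _ (hn ▸ reducedWidth_mul_sub_mul_lt hgP hyP (hmin y hys hyP) hzP) hzs rfl
  refine ⟨M + 1, a + c ^ M * e, ?_⟩
  convert hM using 1
  ring

theorem eq_of_toIdeal_homogeneousCore_lt_of_le {q s : Ideal R} [hq : q.IsPrime] [hs : s.IsPrime]
    (hPq : (s.homogeneousCore 𝒜).toIdeal < q) (hqs : q ≤ s) : q = s := by
  set P := (s.homogeneousCore 𝒜).toIdeal
  have hP : P.IsPrime := hs.homogeneousCore
  have hPs : P ≤ s := toIdeal_homogeneousCore_le 𝒜 s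
  obtain ⟨f, hfq, hfP⟩ := SetLike.exists_of_lt hPq
  obtain ⟨g, ⟨hgs, hgP⟩, hgmin⟩ := exists_minimalFor_of_wellFoundedLT
    (fun w => w ∈ s ∧ w ∉ P) (P.reducedWidth 𝒜) ⟨f, hqs hfq, hfP⟩
  have hmin : ∀ w ∈ s, w ∉ P → P.reducedWidth 𝒜 g ≤ P.reducedWidth 𝒜 w :=
    fun w hws hwP => le_of_not_gt fun h => h.not_ge (hgmin ⟨hws, hwP⟩ h.le)
  set c := (decompose 𝒜 g (P.reducedTop 𝒜 g) : R)
  have hcs : c ∉ s := fun h => decompose_reducedTop_notMem hgP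
    (mem_homogeneousCore_of_homogeneous_of_mem ⟨_, SetLike.coe_mem _⟩ h)
  have hcq : c ∉ q := fun h => hcs (hqs h)
  by_cases hgq : g ∈ q
  · refine le_antisymm hqs fun y hys => ?_
    obtain ⟨N, a, hN⟩ : ∃ (N : ℕ) (a : R), c ^ N * y - a * g ∈ P :=
      exists_pow_mul_sub_mul_mem hgs hgP hmin hys
    have hcy : c ^ N * y ∈ q := by
      simpa using q.add_mem (hPq.le hN) (q.mul_mem_left a hgq)
    exact (hq.mem_or_mem hcy).resolve_left fun h => hcq (hq.mem_of_pow_mem N h)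
  -- The reduced width of `g` is positive, as `g` would otherwise agree mod `P` with `c ∈ s`.
  have hgwidth : 0 < P.reducedWidth 𝒜 g := Nat.pos_of_ne_zero fun h => hcs <| by
    simpa using s.sub_mem hgs (hPs (sub_decompose_reducedTop_mem_of_reducedWidth_eq_zero hgP h))
  exfalso
  induction hn : P.reducedWidth 𝒜 f using Nat.strong_induction_on generalizing f with
  | _ n ih =>
  obtain ⟨N, a, hN⟩ : ∃ (N : ℕ) (a : R), c ^ N * f - a * g ∈ P :=
    exists_pow_mul_sub_mul_mem hgs hgP hmin (hqs hfq)
  have hcN : c ^ N ∉ P := fun h => hcs (hPs (hP.mem_of_pow_mem N h))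
  have haq : a ∈ q := by
    have hag : a * g ∈ q := by simpa using q.sub_mem (q.mul_mem_left (c ^ N) hfq) (hPq.le hN)
    exact (hq.mem_or_mem hag).resolve_right hgq
  have haP : a ∉ P := fun ha => hP.mul_notMem hcN hfP <| by
    simpa using P.add_mem hN (P.mul_mem_right g ha)
  have hwidth := reducedWidth_eq_of_sub_mem (s.homogeneousCore 𝒜).isHomogeneous hN
  rw [reducedWidth_mul hcN hfP, reducedWidth_mul haP hgP,
    reducedWidth_eq_zero_of_mem (SetLike.pow_mem_graded N (SetLike.coe_mem _)) hcN] at hwidth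
  exact ih _ (by omega) a haq haP rfl

theorem toIdeal_homogeneousCore_lt_of_lt_of_lt {p q s : Ideal R} (hq : q.IsPrime)
    (hs : s.IsPrime) (hpq : p < q) (hqs : q < s) :
    (p.homogeneousCore 𝒜).toIdeal < (s.homogeneousCore 𝒜).toIdeal := by
  refine (homogeneousCore_mono 𝒜 (hpq.trans hqs).le).lt_of_ne fun h => hqs.ne ?_
  refine eq_of_toIdeal_homogeneousCore_lt_of_le (𝒜 := 𝒜) (lt_of_le_of_lt ?_ hpq) hqs.le
  exact h ▸ toIdeal_homogeneousCore_le 𝒜 p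

end Ideal

theorem exists_homogeneous_chain_of_chain_general {k R : Type*} [Field k] [CommRing R] [Algebra k R]
    (𝒜 : ℕ → Submodule k R) [GradedAlgebra 𝒜]
    (r : ℕ) (𝔭 : Fin (r + 1) → Ideal R) (hmono : StrictMono 𝔭)
    (hprime : ∀ i, (𝔭 i).IsPrime) :
    ∃ 𝔮 : Fin (r / 2 + 1) → Ideal R, StrictMono 𝔮 ∧
      (∀ i, (𝔮 i).IsPrime) ∧ (∀ i, (𝔮 i).IsHomogeneous 𝒜) := by
  refine ⟨fun i => ((𝔭 ⟨2 * i, by omega⟩).homogeneousCore 𝒜).toIdeal,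
    Fin.strictMono_iff_lt_succ.mpr fun i => ?_, fun i => (hprime _).homogeneousCore,
    fun i => (Ideal.homogeneousCore 𝒜 _).isHomogeneous⟩
  have hi := i.isLt
  exact Ideal.toIdeal_homogeneousCore_lt_of_lt_of_lt (hprime ⟨2 * i + 1, by omega⟩) (hprime _)
    (hmono (Fin.mk_lt_mk.mpr (by simp))) (hmono (Fin.mk_lt_mk.mpr (by simp; omega)))

/-- in an `ℕ`-graded algebra over a field `k` with degree-zero part `k·1`,
any strictly increasing chain of prime ideals of length `r` yields a strictly increasing
chain of *homogeneous* prime ideals of length at least `⌊r/2⌋`.  In particular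
`⌊dim R / 2⌋ ≤ dim^gr R ≤ dim R`. -/
theorem exists_homogeneous_chain_of_chain {k R : Type*} [Field k] [CommRing R] [Algebra k R]
    (𝒜 : ℕ → Submodule k R) [GradedAlgebra 𝒜] (h0 : 𝒜 0 = 1)
    (r : ℕ) (𝔭 : Fin (r + 1) → Ideal R) (hmono : StrictMono 𝔭)
    (hprime : ∀ i, (𝔭 i).IsPrime) :
    ∃ 𝔮 : Fin (r / 2 + 1) → Ideal R, StrictMono 𝔮 ∧
      (∀ i, (𝔮 i).IsPrime) ∧ (∀ i, (𝔮 i).IsHomogeneous 𝒜) :=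
  exists_homogeneous_chain_of_chain_general 𝒜 r 𝔭 hmono hprime
end

section
/- Let k be a field and R a commutative graded k-algebra with grading 𝒜 : ℕ → Submodule k R, 𝒜 0 = k·1. If R is a Hilbert–Serre ring, then the Krull dimension of R is finite: ringKrullDim R < ⊤. -/
/-!
A strict chain of primes `𝔮₀ < ⋯ < 𝔮ₘ` yields elements `a₁, …, aₘ` with `aᵢ ∈ 𝔮ᵢ \ 𝔮ᵢ₋₁` that are
algebraically independent over `k`, even modulo `𝔮₀`: reducing a relation modulo `𝔮₁` shows that
its part free of `a₁` vanishes, and since `a₁ ∉ 𝔮₀` one may then divide by `a₁`. The primes need not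
be homogeneous, so the `aᵢ` are only known to have degree at most some `D`; the `(n + 1) ^ m`
monomials with exponents at most `n` are then linearly independent elements of degree at most
`m n D`. On the other hand, evaluating the Hilbert–Serre bound at `t = 1 - 1 / (N + 2)` shows that
the elements of degree at most `N` span a space of dimension `O(N ^ (d + 1))`. Hence `m ≤ d + 1`
for every chain.
-/

/-- The boundedness condition defining Hilbert–Serre rings: for all `t ∈ (0,1)` the
Poincaré series `∑ F n * tⁿ` converges and `(1 - t) ^ d` times its sum is bounded by a
uniform constant `C > 0`. -/
def HSBound (F : ℕ → ℕ) (d : ℕ) : Prop :=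
  ∃ C : ℝ, 0 < C ∧ ∀ t : ℝ, t ∈ Set.Ioo (0 : ℝ) 1 →
    Summable (fun n => (F n : ℝ) * t ^ n) ∧
      (1 - t) ^ d * (∑' n, (F n : ℝ) * t ^ n) ≤ C

/-- A graded algebra with grading `𝒜` is a *Hilbert–Serre ring* if every graded component
is finite dimensional over `k` and the Poincaré series `∑ dim_k (𝒜 n) tⁿ` satisfies the
boundedness condition `HSBound` for some `d`. -/
def IsHilbertSerre {k R : Type*} [Field k] [CommRing R] [Algebra k R]
    (𝒜 : ℕ → Submodule k R) : Prop :=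
  (∀ n, FiniteDimensional k (𝒜 n)) ∧
    ∃ d, HSBound (fun n => Module.finrank k (𝒜 n)) d

/-- The Hilbert–Serre dimension `d(R)`: the least `d` such that `(1-t)^d P_R(t)` is
bounded on `(0,1)`. -/
noncomputable def hsDim {k R : Type*} [Field k] [CommRing R] [Algebra k R]
    (𝒜 : ℕ → Submodule k R) : ℕ :=
  sInf {d | HSBound (fun n => Module.finrank k (𝒜 n)) d}

open Finset

theorem sum_range_mul_pow_le_tsum {f : ℕ → ℝ} (hf : ∀ n, 0 ≤ f n) {t : ℝ} (ht₀ : 0 ≤ t)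
    (ht₁ : t ≤ 1) (hsum : Summable fun n => f n * t ^ n) (N : ℕ) :
    (∑ j ∈ range (N + 1), f j) * t ^ N ≤ ∑' n, f n * t ^ n := by
  calc (∑ j ∈ range (N + 1), f j) * t ^ N
      ≤ ∑ j ∈ range (N + 1), f j * t ^ j := by
        rw [sum_mul]
        exact sum_le_sum fun j hj => mul_le_mul_of_nonneg_left
          (pow_le_pow_of_le_one ht₀ ht₁ (Nat.lt_succ_iff.mp (mem_range.mp hj))) (hf j)
    _ ≤ ∑' n, f n * t ^ n := hsum.sum_le_tsum _ fun n _ => mul_nonneg (hf n) (pow_nonneg ht₀ n)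

theorem HSBound.exists_sum_range_le {F : ℕ → ℕ} {d : ℕ} (h : HSBound F d) :
    ∃ C : ℝ, ∀ N : ℕ, ∑ j ∈ range (N + 1), (F j : ℝ) ≤ C * (N + 2) ^ (d + 1) := by
  obtain ⟨C, -, hC⟩ := h
  refine ⟨C, fun N => ?_⟩
  set u : ℝ := N + 2
  have hu : 0 < u := by positivity
  -- evaluate at `t = 1 - 1/u`, where Bernoulli gives `t ^ N ≥ 1 - N/u ≥ 1/u`
  set t : ℝ := 1 - u⁻¹
  have hu_inv : u⁻¹ ≤ 1 / 2 := by
    rw [one_div]; exact inv_anti₀ two_pos (by simp [u])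
  have ht : t ∈ Set.Ioo 0 1 := ⟨by linarith, by simpa [t] using hu⟩
  obtain ⟨hsum, hbound⟩ := hC t ht
  have hpow : u⁻¹ ≤ t ^ N := by
    have hbern := one_add_mul_le_pow (a := -u⁻¹) (by linarith) N
    have : (N : ℝ) * u⁻¹ + u⁻¹ ≤ 1 := by
      rw [← add_one_mul, mul_inv_le_iff₀ hu]; simp [u]
    rw [show 1 + -u⁻¹ = t by ring] at hbern
    linarith
  set S := ∑ j ∈ range (N + 1), (F j : ℝ)
  have hS : 0 ≤ S := sum_nonneg fun j _ => Nat.cast_nonneg _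
  have h1t : (1 - t) ^ d * u ^ d = 1 := by
    rw [← mul_pow, show 1 - t = u⁻¹ by ring, inv_mul_cancel₀ hu.ne', one_pow]
  calc S = S * u⁻¹ * u := by field_simp
    _ ≤ S * t ^ N * u := by gcongr
    _ ≤ (∑' n, (F n : ℝ) * t ^ n) * u := by
        gcongr
        exact sum_range_mul_pow_le_tsum (fun n => Nat.cast_nonneg _) ht.1.le ht.2.le hsum N
    _ = (1 - t) ^ d * u ^ d * (∑' n, (F n : ℝ) * t ^ n) * u := by rw [h1t, one_mul]
    _ = (1 - t) ^ d * (∑' n, (F n : ℝ) * t ^ n) * u ^ (d + 1) := by ring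
    _ ≤ C * u ^ (d + 1) := by gcongr

theorem le_of_forall_pow_le_mul_pow {m e : ℕ} {A : ℝ}
    (h : ∀ n : ℕ, ((n : ℝ) + 1) ^ m ≤ A * ((n : ℝ) + 1) ^ e) : m ≤ e := by
  by_contra! hem
  obtain ⟨n, hn⟩ := exists_nat_gt A
  have hn1 : (1 : ℝ) ≤ n + 1 := by simp
  have := calc ((n : ℝ) + 1) ^ (e + 1) ≤ ((n : ℝ) + 1) ^ m := pow_le_pow_right₀ hn1 hem
    _ ≤ A * ((n : ℝ) + 1) ^ e := h n
    _ < ((n : ℝ) + 1) * ((n : ℝ) + 1) ^ e := by gcongr; linarith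
  rw [pow_succ'] at this
  exact lt_irrefl _ this

theorem Submodule.finrank_finset_sup_le {K V ι : Type*} [DivisionRing K] [AddCommGroup V]
    [Module K V] (s : Finset ι) (p : ι → Submodule K V) [∀ i, FiniteDimensional K (p i)] :
    Module.finrank K ↥(s.sup p : Submodule K V) ≤ ∑ i ∈ s, Module.finrank K (p i) := by
  classical
  induction s using Finset.induction_on with
  | empty => simp
  | insert i s hi ih =>
    rw [sup_insert, sum_insert hi]
    exact (Submodule.finrank_add_le_finrank_add_finrank _ _).trans (Nat.add_le_add_left ih _)

section gradedFiltration

variable {k R : Type*} [CommSemiring k] [Semiring R] [Algebra k R] (𝒜 : ℕ → Submodule k R)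

def gradedFiltration (N : ℕ) : Submodule k R := (range (N + 1)).sup 𝒜

variable {𝒜}

theorem gradedFiltration_mono {N N' : ℕ} (h : N ≤ N') :
    gradedFiltration 𝒜 N ≤ gradedFiltration 𝒜 N' :=
  sup_mono (range_subset_range.mpr (by omega))

theorem le_gradedFiltration {i N : ℕ} (h : i ≤ N) : 𝒜 i ≤ gradedFiltration 𝒜 N :=
  le_sup (mem_range.mpr (by omega))

theorem exists_mem_gradedFiltration [DirectSum.Decomposition 𝒜] (x : R) :
    ∃ N, x ∈ gradedFiltration 𝒜 N := by
  classical
  set s := (DirectSum.decompose 𝒜 x).support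
  refine ⟨s.sup id, ?_⟩
  have := Submodule.sum_mem (gradedFiltration 𝒜 (s.sup id)) fun i (hi : i ∈ s) =>
    le_gradedFiltration (le_sup (f := id) hi) (DirectSum.decompose 𝒜 x i).2
  rwa [DirectSum.sum_support_decompose 𝒜 x] at this

variable (𝒜) in
theorem exists_forall_mem_gradedFiltration {ι : Type*} [DirectSum.Decomposition 𝒜] [Finite ι]
    (a : ι → R) :
    ∃ D, ∀ i, a i ∈ gradedFiltration 𝒜 D := by
  have := Fintype.ofFinite ι
  choose N hN using fun i => exists_mem_gradedFiltration (𝒜 := 𝒜) (a i)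
  exact ⟨univ.sup N, fun i => gradedFiltration_mono (le_sup (mem_univ i)) (hN i)⟩

theorem gradedFiltration_mul_le [SetLike.GradedMul 𝒜] (N N' : ℕ) :
    gradedFiltration 𝒜 N * gradedFiltration 𝒜 N' ≤ gradedFiltration 𝒜 (N + N') := by
  have h (M : ℕ) : gradedFiltration 𝒜 M = ⨆ i ∈ range (M + 1), 𝒜 i := Finset.sup_eq_iSup _ _
  simp only [h N, h N', Submodule.iSup_mul, Submodule.mul_iSup, iSup_le_iff, mem_range]
  intro i hi j hj
  exact Submodule.mul_le.mpr fun x hx y hy =>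
    le_gradedFiltration (by omega) (SetLike.GradedMul.mul_mem hx hy)

variable [SetLike.GradedMonoid 𝒜]

theorem one_mem_gradedFiltration (N : ℕ) : (1 : R) ∈ gradedFiltration 𝒜 N :=
  le_gradedFiltration (Nat.zero_le N) SetLike.GradedOne.one_mem

theorem pow_mem_gradedFiltration {x : R} {N : ℕ} (hx : x ∈ gradedFiltration 𝒜 N) (t : ℕ) :
    x ^ t ∈ gradedFiltration 𝒜 (t * N) := by
  induction t with
  | zero => simpa using one_mem_gradedFiltration 0
  | succ t ih =>
    simpa [pow_succ, add_mul] using gradedFiltration_mul_le _ _ (Submodule.mul_mem_mul ih hx)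

end gradedFiltration

section CommSemiring

variable {k R : Type*} [CommSemiring k] [CommSemiring R] [Algebra k R] {𝒜 : ℕ → Submodule k R}
  [SetLike.GradedMonoid 𝒜]

theorem prod_mem_gradedFiltration {ι : Type*} {s : Finset ι} {f : ι → R} {N : ι → ℕ}
    (hf : ∀ i ∈ s, f i ∈ gradedFiltration 𝒜 (N i)) :
    ∏ i ∈ s, f i ∈ gradedFiltration 𝒜 (∑ i ∈ s, N i) := by
  classical
  induction s using Finset.induction_on with
  | empty => simpa using one_mem_gradedFiltration 0
  | insert i s hi ih =>
    rw [prod_insert hi, sum_insert hi]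
    exact gradedFiltration_mul_le _ _ (Submodule.mul_mem_mul (hf i (mem_insert_self i s))
      (ih fun j hj => hf j (mem_insert_of_mem hj)))

theorem prod_pow_mem_gradedFiltration {ι : Type*} [Fintype ι] {a : ι → R} {D : ℕ}
    (ha : ∀ i, a i ∈ gradedFiltration 𝒜 D) (α : ι → ℕ) :
    ∏ i, a i ^ α i ∈ gradedFiltration 𝒜 (∑ i, α i * D) :=
  prod_mem_gradedFiltration fun i _ => pow_mem_gradedFiltration (ha i) (α i)

end CommSemiring

instance {k R : Type*} [Field k] [Ring R] [Algebra k R] (𝒜 : ℕ → Submodule k R)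
    [∀ i, FiniteDimensional k (𝒜 i)] (N : ℕ) : FiniteDimensional k (gradedFiltration 𝒜 N) :=
  Submodule.finiteDimensional_finset_sup _ _

theorem finrank_gradedFiltration_le {k R : Type*} [Field k] [Ring R] [Algebra k R]
    (𝒜 : ℕ → Submodule k R) [∀ i, FiniteDimensional k (𝒜 i)] (N : ℕ) :
    Module.finrank k (gradedFiltration 𝒜 N) ≤ ∑ j ∈ range (N + 1), Module.finrank k (𝒜 j) :=
  Submodule.finrank_finset_sup_le _ _

theorem IsHilbertSerre.exists_finrank_gradedFiltration_le {k R : Type*} [Field k] [CommRing R]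
    [Algebra k R] {𝒜 : ℕ → Submodule k R} (h : IsHilbertSerre 𝒜) :
    ∃ (d : ℕ) (C : ℝ), ∀ N : ℕ,
      (Module.finrank k (gradedFiltration 𝒜 N) : ℝ) ≤ C * (N + 2) ^ (d + 1) := by
  obtain ⟨_, d, hd⟩ := h
  obtain ⟨C, hC⟩ := hd.exists_sum_range_le
  refine ⟨d, C, fun N => le_trans ?_ (hC N)⟩
  exact_mod_cast finrank_gradedFiltration_le 𝒜 N

open Polynomial in
theorem Polynomial.eq_zero_of_eval₂_mem {S R : Type*} [CommRing S] [CommRing R]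
    {p q : Ideal R} [p.IsPrime] (hpq : p ≤ q) {φ : S →+* R} (hφ : ∀ s, φ s ∈ q → s = 0)
    {a : R} (haq : a ∈ q) (hap : a ∉ p) (f : S[X]) (hf : f.eval₂ φ a ∈ p) : f = 0 := by
  induction f using Polynomial.recOnHorner with
  | M0 => rfl
  | MC f c hf0 hc _ =>
    obtain ⟨g, rfl⟩ := X_dvd_iff.mpr hf0
    rw [eval₂_add, eval₂_C, eval₂_mul, eval₂_X] at hf
    have hcq : φ c ∈ q := by
      simpa using q.sub_mem (hpq hf) (q.mul_mem_right (g.eval₂ φ a) haq)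
    exact absurd (hφ c hcq) hc
  | MX f _ ih =>
    rw [eval₂_mul, eval₂_X] at hf
    rw [ih ((Ideal.IsPrime.mem_or_mem ‹_› hf).resolve_right hap), zero_mul]

theorem MvPolynomial.aeval_cons_eq_eval₂_finSuccEquiv {k R : Type*} [CommRing k] [CommRing R]
    [Algebra k R] {m : ℕ} (a₀ : R) (a : Fin m → R) (f : MvPolynomial (Fin (m + 1)) k) :
    aeval (Fin.cons a₀ a) f = (finSuccEquiv k m f).eval₂ (aeval a).toRingHom a₀ := by
  induction f using MvPolynomial.induction_on with
  | C c =>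
    rw [← MvPolynomial.algebraMap_eq, AlgEquiv.commutes]
    simp [Polynomial.algebraMap_apply]
  | add f g hf hg => simp [hf, hg]
  | mul_X f i hf =>
    induction i using Fin.cases <;> simp [hf, finSuccEquiv_X_zero, finSuccEquiv_X_succ]

theorem exists_eq_zero_of_aeval_mem_of_strictMono {k R : Type*} [Field k] [CommRing R]
    [Algebra k R] {m : ℕ} (q : Fin (m + 1) → Ideal R) (hprime : ∀ i, (q i).IsPrime)
    (hq : StrictMono q) :
    ∃ a : Fin m → R, ∀ f : MvPolynomial (Fin m) k, MvPolynomial.aeval a f ∈ q 0 → f = 0 := by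
  induction m with
  | zero =>
    refine ⟨Fin.elim0, fun f hf => ?_⟩
    rw [MvPolynomial.eq_C_of_isEmpty f, MvPolynomial.aeval_C] at hf
    rw [MvPolynomial.eq_C_of_isEmpty f, MvPolynomial.C_eq_zero]
    by_contra hc
    exact (hprime 0).ne_top (Ideal.eq_top_of_isUnit_mem _ hf ((isUnit_iff_ne_zero.mpr hc).map _))
  | succ m ih =>
    obtain ⟨a, ha⟩ := ih (fun i => q i.succ) (fun i => hprime _) (hq.comp Fin.strictMono_succ)
    obtain ⟨a₀, ha₀q, ha₀p⟩ := SetLike.exists_of_lt (hq Fin.zero_lt_one)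
    have := hprime 0
    refine ⟨Fin.cons a₀ a, fun f hf => ?_⟩
    rw [MvPolynomial.aeval_cons_eq_eval₂_finSuccEquiv] at hf
    exact (MvPolynomial.finSuccEquiv k m).map_eq_zero_iff.mp
      (Polynomial.eq_zero_of_eval₂_mem (hq.monotone (Fin.zero_le _)) ha ha₀q ha₀p _ hf)

theorem LTSeries.exists_algebraicIndependent {k R : Type*} [Field k] [CommRing R] [Algebra k R]
    (l : LTSeries (PrimeSpectrum R)) : ∃ a : Fin l.length → R, AlgebraicIndependent k a := by
  obtain ⟨a, ha⟩ := exists_eq_zero_of_aeval_mem_of_strictMono (k := k) (fun i => (l i).asIdeal)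
    (fun i => (l i).isPrime) (fun i j hij => l.strictMono hij)
  exact ⟨a, algebraicIndependent_iff.mpr fun f hf => ha f (hf ▸ Submodule.zero_mem _)⟩

theorem AlgebraicIndependent.linearIndependent_prod_pow {ι R A : Type*} [Fintype ι] [CommRing R]
    [CommRing A] [Algebra R A] {a : ι → A} (ha : AlgebraicIndependent R a) :
    LinearIndependent R (fun α : ι → ℕ => ∏ i, a i ^ α i) := by
  have hmonomial : (fun α : ι → ℕ => ∏ i, a i ^ α i) =
      (MvPolynomial.aeval a).toLinearMap ∘ MvPolynomial.basisMonomials ι R ∘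
        Finsupp.equivFunOnFinite.symm := by
    ext α
    simp [MvPolynomial.aeval_monomial, Finsupp.prod_fintype]
  rw [hmonomial]
  exact ((MvPolynomial.basisMonomials ι R).linearIndependent.map' _
    (LinearMap.ker_eq_bot.mpr (algebraicIndependent_iff_injective_aeval.mp ha))).comp _
      Finsupp.equivFunOnFinite.symm.injective

section AlgebraicIndependent

variable {k R : Type*} [Field k] [CommRing R] [Algebra k R] {𝒜 : ℕ → Submodule k R}
  [SetLike.GradedMonoid 𝒜] {m : ℕ} {a : Fin m → R}

theorem AlgebraicIndependent.pow_le_finrank_gradedFiltration [∀ i, FiniteDimensional k (𝒜 i)]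
    (ha : AlgebraicIndependent k a) {D : ℕ} (haD : ∀ i, a i ∈ gradedFiltration 𝒜 D) (n : ℕ) :
    (n + 1) ^ m ≤ Module.finrank k (gradedFiltration 𝒜 (m * n * D)) := by
  let monomial (α : Fin m → Fin (n + 1)) : gradedFiltration 𝒜 (m * n * D) :=
    ⟨∏ i, a i ^ (α i : ℕ), gradedFiltration_mono (by
      calc ∑ i, (α i : ℕ) * D ≤ ∑ _i : Fin m, n * D :=
            sum_le_sum fun i _ => Nat.mul_le_mul_right D (Nat.lt_succ_iff.mp (α i).2)
        _ = m * n * D := by simp [mul_assoc])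
      (prod_pow_mem_gradedFiltration haD _)⟩
  have hli : LinearIndependent k monomial :=
    LinearIndependent.of_comp (gradedFiltration 𝒜 (m * n * D)).subtype <|
      ha.linearIndependent_prod_pow.comp _ fun α β h => funext fun i => Fin.ext (congrFun h i)
  simpa using hli.fintype_card_le_finrank

theorem AlgebraicIndependent.card_le_of_finrank_gradedFiltration_le [DirectSum.Decomposition 𝒜]
    [∀ i, FiniteDimensional k (𝒜 i)] (ha : AlgebraicIndependent k a) {d : ℕ} {C : ℝ}
    (hC : ∀ N : ℕ, (Module.finrank k (gradedFiltration 𝒜 N) : ℝ) ≤ C * (N + 2) ^ (d + 1)) :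
    m ≤ d + 1 := by
  obtain ⟨D, haD⟩ := exists_forall_mem_gradedFiltration 𝒜 a
  have hC₀ : 0 ≤ C := nonneg_of_mul_nonneg_left ((Nat.cast_nonneg _).trans (hC 0)) (by positivity)
  refine le_of_forall_pow_le_mul_pow (A := C * (m * D + 2) ^ (d + 1)) fun n => ?_
  calc ((n : ℝ) + 1) ^ m ≤ Module.finrank k (gradedFiltration 𝒜 (m * n * D)) := by
        exact_mod_cast ha.pow_le_finrank_gradedFiltration haD n
    _ ≤ C * ((m * n * D : ℕ) + 2) ^ (d + 1) := hC _
    _ ≤ C * (((m * D : ℕ) + 2) * (n + 1)) ^ (d + 1) := by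
        gcongr
        exact_mod_cast (show m * n * D + 2 ≤ (m * D + 2) * (n + 1) by nlinarith)
    _ = C * (m * D + 2) ^ (d + 1) * (n + 1) ^ (d + 1) := by rw [mul_pow]; push_cast; ring

end AlgebraicIndependent

theorem ringKrullDim_lt_top_of_hilbertSerre_general {k R : Type*} [Field k] [CommRing R] [Algebra k R]
    (𝒜 : ℕ → Submodule k R) [GradedAlgebra 𝒜]
    (hHS : IsHilbertSerre 𝒜) :
    ringKrullDim R < ⊤ := by
  obtain ⟨d, C, hC⟩ := hHS.exists_finrank_gradedFiltration_le
  have : ∀ i, FiniteDimensional k (𝒜 i) := hHS.1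
  have hlength (l : LTSeries (PrimeSpectrum R)) : l.length < d + 2 := by
    obtain ⟨a, ha⟩ := l.exists_algebraicIndependent (k := k)
    exact Nat.lt_succ_of_le (ha.card_le_of_finrank_gradedFiltration_le hC)
  exact (Order.krullDim_lt_coe_iff.mpr hlength).trans
    (WithBot.coe_lt_coe.mpr (ENat.natCast_lt_top _))

/-- a Hilbert–Serre ring has finite Krull dimension. -/
theorem ringKrullDim_lt_top_of_hilbertSerre {k R : Type*} [Field k] [CommRing R] [Algebra k R]
    (𝒜 : ℕ → Submodule k R) [GradedAlgebra 𝒜] (h0 : 𝒜 0 = 1)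
    (hHS : IsHilbertSerre 𝒜) :
    ringKrullDim R < ⊤ :=
  ringKrullDim_lt_top_of_hilbertSerre_general 𝒜 hHS
end
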